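/- arXiv:2307.15056 — 2 statements merged into one kernel-verified Lean document; each statement's English description precedes it below -/
import Mathlib

section
/- The intersection of the real subspaces V₁⁻ and Ṽ₁⁰ of su(2)³ is trivial: V₁⁻ ⊓ Ṽ₁⁰ = {0}. (This is the paper's observation in Section 4 that the case j = 1 is special because V₁⁻ ∩ Ṽ₁⁰ = {0}.) -/
/-!
The real subspaces `V₁⁻` and `Ṽ₁⁰` of `su(2)³` intersect trivially
(the paper's observation that the case `j = 1` is special).
-/

open Complex Matrix

/-- `𝔱₁ = -(i/2)σ₁`. -/
noncomputable def t1 : Matrix (Fin 2) (Fin 2) ℂ := -(I / 2) • !![0, 1; 1, 0]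
/-- `𝔱₂ = -(i/2)σ₂`. -/
noncomputable def t2 : Matrix (Fin 2) (Fin 2) ℂ := -(I / 2) • !![0, -I; I, 0]
/-- `𝔱₃ = -(i/2)σ₃`. -/
noncomputable def t3 : Matrix (Fin 2) (Fin 2) ℂ := -(I / 2) • !![1, 0; 0, -1]

/-- `V₁⁻ = ℝ-span{(𝔱₁,𝔱₂,𝔱₃)} ⊆ su(2)³`. -/
noncomputable def V1m : Submodule ℝ (Fin 3 → Matrix (Fin 2) (Fin 2) ℂ) :=
  Submodule.span ℝ {![t1, t2, t3]}

/-- `Ṽ₁⁰ = ℝ-span{(𝔱₁,0,-𝔱₂), (0,𝔱₁,-𝔱₃), (-𝔱₃,𝔱₂,0)} ⊆ su(2)³`. -/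
noncomputable def V1t0 : Submodule ℝ (Fin 3 → Matrix (Fin 2) (Fin 2) ℂ) :=
  Submodule.span ℝ {![t1, 0, -t2], ![0, t1, -t3], ![-t3, t2, 0]}

open Submodule

theorem linearIndependent_t : LinearIndependent ℝ ![t1, t2, t3] := by
  refine Fintype.linearIndependent_iff.mpr fun g hg => ?_
  have h₂ : g 2 = 0 := by
    simpa [Fin.sum_univ_three, t1, t2, t3, Complex.ext_iff] using congrFun (congrFun hg 0) 0
  have h₀₁ : g 1 = 0 ∧ g 0 = 0 := by
    simpa [Fin.sum_univ_three, t1, t2, t3, Complex.ext_iff] using congrFun (congrFun hg 1) 0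
  intro i
  fin_cases i <;> simp [h₂, h₀₁]

/-- Comparing the `w`-coefficients of the first components gives `d = 0`, and the
`v`-coefficients of the second components give `a = d`. -/
theorem span_singleton_inf_span_triple_eq_bot {R M : Type*} [Ring R] [AddCommGroup M]
    [Module R M] {u v w : M} (huvw : LinearIndependent R ![u, v, w]) :
    span R {![u, v, w]} ⊓ span R {![u, 0, -v], ![0, u, -w], ![-w, v, 0]} = ⊥ := by
  have coeffs := Fintype.linearIndependent_iffₛ.mp huvw
  rw [eq_bot_iff]
  rintro x ⟨hx₁, hx₂⟩
  obtain ⟨a, rfl⟩ := mem_span_singleton.mp hx₁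
  obtain ⟨b, c, d, hx⟩ := mem_span_triple.mp hx₂
  have hd : d = 0 := by
    have h₀ : a • u = b • u + -d • w := by simpa using (congrFun hx 0).symm
    simpa using (coeffs ![a, 0, 0] ![b, 0, -d] (by simpa [Fin.sum_univ_three] using h₀) 2).symm
  have had : a = d := by
    have h₁ : a • v = c • u + d • v := by simpa using (congrFun hx 1).symm
    simpa using coeffs ![0, a, 0] ![c, d, 0] (by simpa [Fin.sum_univ_three] using h₁) 1
  simp [had, hd]

theorem statement9 : V1m ⊓ V1t0 = ⊥ :=
  span_singleton_inf_span_triple_eq_bot linearIndependent_t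
end

section
/- The spin-spin operator 𝔍 satisfies: 𝔍X = 2•X for every X ∈ V₁⁻, 𝔍X = X for every X ∈ V₁⁰, and 𝔍X = -X for every X ∈ V₁⁺. (This instantiates, for j = 1, the paper's claim in the proof of Lemma 4.1 that the subspaces V_j^-, V_j^0, V_j^+ are eigenspaces of the spin-spin operator 𝔍 = 𝔰·𝔱 with eigenvalues j+1, 1 and -j respectively.) -/
/-!
For `j = 1`, the subspaces `V₁⁻, V₁⁰, V₁⁺` of `su(2)³` are eigenspaces of the
spin-spin operator `𝔍 = 𝔰·𝔱`, `(𝔍X)ᵢ = Σⱼₖ εᵢⱼₖ[𝔱ⱼ, Xₖ]`, with eigenvalues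
`j+1 = 2`, `1` and `-j = -1` respectively.
-/

open Complex Matrix

/-- The basis `(𝔱₁, 𝔱₂, 𝔱₃)` of `su(2)`, as a function on `Fin 3`. -/
noncomputable def tt : Fin 3 → Matrix (Fin 2) (Fin 2) ℂ := ![t1, t2, t3]

/-- The Levi-Civita symbol `εᵢⱼₖ` on three indices. -/
noncomputable def eps (i j k : Fin 3) : ℝ :=
  (((i : ℕ) : ℝ) - ((j : ℕ) : ℝ)) * (((j : ℕ) : ℝ) - ((k : ℕ) : ℝ)) *
    (((k : ℕ) : ℝ) - ((i : ℕ) : ℝ)) / 2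

/-- The spin-spin operator `𝔍` on `su(2)³`: `(𝔍X)ᵢ = Σⱼₖ εᵢⱼₖ [𝔱ⱼ, Xₖ]`. -/
noncomputable def Jspin (X : Fin 3 → Matrix (Fin 2) (Fin 2) ℂ) :
    Fin 3 → Matrix (Fin 2) (Fin 2) ℂ :=
  fun i => ∑ j : Fin 3, ∑ k : Fin 3, eps i j k • ⁅tt j, X k⁆

/-- `V₁⁰ = ℝ-span{(-𝔱₂,𝔱₁,0), (-𝔱₃,0,𝔱₁), (0,-𝔱₃,𝔱₂)}`. -/
noncomputable def V10 : Submodule ℝ (Fin 3 → Matrix (Fin 2) (Fin 2) ℂ) :=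
  Submodule.span ℝ {![-t2, t1, 0], ![-t3, 0, t1], ![0, -t3, t2]}

/-- `V₁⁺ = ℝ-span{(𝔱₁,-𝔱₂,0), (𝔱₁,0,-𝔱₃), (𝔱₂,𝔱₁,0), (𝔱₃,0,𝔱₁), (0,𝔱₃,𝔱₂)}`. -/
noncomputable def V1p : Submodule ℝ (Fin 3 → Matrix (Fin 2) (Fin 2) ℂ) :=
  Submodule.span ℝ {![t1, -t2, 0], ![t1, 0, -t3], ![t2, t1, 0], ![t3, 0, t1], ![0, t3, t2]}

attribute [local instance] LieRing.ofAssociativeRing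

lemma lie12 : ⁅t1, t2⁆ = t3 := by
  ext a b; fin_cases a <;> fin_cases b <;>
    simp [t1, t2, t3, Ring.lie_def, Matrix.mul_apply, Fin.sum_univ_two]
  all_goals ring_nf
  all_goals first
    | linear_combination (I/2) * Complex.I_sq
    | linear_combination (-(I/2)) * Complex.I_sq

lemma lie23 : ⁅t2, t3⁆ = t1 := by
  ext a b; fin_cases a <;> fin_cases b <;>
    simp [t1, t2, t3, Ring.lie_def, Matrix.mul_apply, Fin.sum_univ_two]
  all_goals ring_nf
  all_goals first
    | linear_combination (I/2) * Complex.I_sq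
    | linear_combination (-(I/2)) * Complex.I_sq

lemma lie31 : ⁅t3, t1⁆ = t2 := by
  ext a b; fin_cases a <;> fin_cases b <;>
    simp [t1, t2, t3, Ring.lie_def, Matrix.mul_apply, Fin.sum_univ_two]
  all_goals ring_nf
  all_goals first
    | linear_combination (I/2) * Complex.I_sq
    | linear_combination (-(I/2)) * Complex.I_sq

lemma lie21 : ⁅t2, t1⁆ = -t3 := by rw [← lie_skew, lie12]
lemma lie32 : ⁅t3, t2⁆ = -t1 := by rw [← lie_skew, lie23]
lemma lie13 : ⁅t1, t3⁆ = -t2 := by rw [← lie_skew, lie31]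

lemma Jspin_add (X Y : Fin 3 → Matrix (Fin 2) (Fin 2) ℂ) :
    Jspin (X + Y) = Jspin X + Jspin Y := by
  funext i
  simp [Jspin, lie_add, smul_add, Finset.sum_add_distrib]

lemma Jspin_smul (r : ℝ) (X : Fin 3 → Matrix (Fin 2) (Fin 2) ℂ) :
    Jspin (r • X) = r • Jspin X := by
  funext i
  simp only [Jspin, Pi.smul_apply, lie_smul, Finset.smul_sum, smul_comm r]

lemma Jspin_eigen {c : ℝ} {S : Set (Fin 3 → Matrix (Fin 2) (Fin 2) ℂ)}
    (h : ∀ v ∈ S, Jspin v = c • v) :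
    ∀ X ∈ Submodule.span ℝ S, Jspin X = c • X := by
  intro X hX
  induction hX using Submodule.span_induction with
  | mem v hv => exact h v hv
  | zero =>
    funext i; simp [Jspin]
  | add x y _ _ hx hy => rw [Jspin_add, hx, hy, smul_add]
  | smul r x _ hx => rw [Jspin_smul, hx, smul_comm]

lemma gen_m : ∀ v ∈ ({![t1, t2, t3]} : Set _), Jspin v = (2:ℝ) • v := by
  rintro v rfl
  funext i; fin_cases i <;>
    norm_num [Jspin, tt, Fin.sum_univ_three, eps, lie12, lie23, lie31,
      lie21, lie32, lie13, lie_self, Matrix.cons_val_two] <;> module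

lemma gen_0 : ∀ v ∈ ({![-t2, t1, 0], ![-t3, 0, t1], ![0, -t3, t2]} : Set _),
    Jspin v = (1:ℝ) • v := by
  rintro v (rfl | rfl | rfl) <;>
  · funext i; fin_cases i <;>
      norm_num [Jspin, tt, Fin.sum_univ_three, eps, lie12, lie23, lie31,
        lie21, lie32, lie13, lie_self, Matrix.cons_val_two] <;> module

lemma gen_p : ∀ v ∈ ({![t1, -t2, 0], ![t1, 0, -t3], ![t2, t1, 0], ![t3, 0, t1],
      ![0, t3, t2]} : Set _), Jspin v = (-1:ℝ) • v := by
  rintro v (rfl | rfl | rfl | rfl | rfl) <;>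
  · funext i; fin_cases i <;>
      norm_num [Jspin, tt, Fin.sum_univ_three, eps, lie12, lie23, lie31,
        lie21, lie32, lie13, lie_self, Matrix.cons_val_two] <;> module

theorem statement11 :
    (∀ X ∈ V1m, Jspin X = (2 : ℝ) • X) ∧
    (∀ X ∈ V10, Jspin X = X) ∧
    (∀ X ∈ V1p, Jspin X = -X) := by
  refine ⟨Jspin_eigen gen_m,
    fun X hX => by simpa using Jspin_eigen gen_0 X hX,
    fun X hX => by simpa [neg_smul] using Jspin_eigen gen_p X hX⟩
end
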